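/- Let B₁ and B₂ be simple skew left braces and α : (B₂,∘) → Aut(B₁,+,∘) a non-trivial group homomorphism. Suppose moreover that α is not injective and that the group (B₁,∘) has trivial center. Then the only ideals of B₁ ⋊_α B₂ are {(0,0)}, B₁ × {0}, and B₁ ⋊_α B₂; in particular B₁ × {0} is the unique non-trivial ideal of the semidirect product. -/

import Mathlib

/-- A *skew left brace* is a set with two group structures `(B,+)` and `(B,∘)`
(the latter written multiplicatively) satisfying `a∘(b+c) = a∘b - a + a∘c`.
The two identity elements automatically coincide. -/
class SkewLeftBrace (B : Type*) extends AddGroup B, Group B where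
  mul_add_eq : ∀ a b c : B, a * (b + c) = a * b - a + a * c

namespace SkewLeftBrace

variable {B : Type*} [SkewLeftBrace B]

/-- The map `λ_a : b ↦ -a + a∘b`. -/
def lmap (a b : B) : B := -a + a * b

/-- The brace star operation `a*b := -a + a∘b - b`. -/
def bstar (a b : B) : B := -a + a * b - b

/-- `X*Y`: the additive subgroup generated by all `bstar x y`, `x ∈ X`, `y ∈ Y`,
regarded as a set. -/
def setStar (X Y : Set B) : Set B :=
  ↑(AddSubgroup.closure {z : B | ∃ x ∈ X, ∃ y ∈ Y, z = bstar x y})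

/-- Pointwise sum of two subsets. -/
def setSum (X Y : Set B) : Set B := {w : B | ∃ x ∈ X, ∃ y ∈ Y, w = x + y}

/-- `X^Z := {z + x - z : x ∈ X, z ∈ Z}`. -/
def setConj (X Z : Set B) : Set B := {w : B | ∃ x ∈ X, ∃ z ∈ Z, w = z + x + -z}

/-- An ideal of a skew left brace: a subgroup of `(B,+)` which is normal in both
`(B,+)` and `(B,∘)` and invariant under all the maps `λ_a`. -/
structure IsIdeal (I : Set B) : Prop where
  zero_mem : (0 : B) ∈ I
  add_mem : ∀ ⦃x y : B⦄, x ∈ I → y ∈ I → x + y ∈ I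
  neg_mem : ∀ ⦃x : B⦄, x ∈ I → -x ∈ I
  add_conj_mem : ∀ (b : B) ⦃x : B⦄, x ∈ I → b + x + -b ∈ I
  mul_mem : ∀ ⦃x y : B⦄, x ∈ I → y ∈ I → x * y ∈ I
  inv_mem : ∀ ⦃x : B⦄, x ∈ I → x⁻¹ ∈ I
  mul_conj_mem : ∀ (b : B) ⦃x : B⦄, x ∈ I → b * x * b⁻¹ ∈ I
  lmap_mem : ∀ (a : B) ⦃x : B⦄, x ∈ I → lmap a x ∈ I

/-- A minimal ideal: a nonzero ideal whose only sub-ideals are `{0}` and itself. -/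
def IsMinimalIdeal (I : Set B) : Prop :=
  IsIdeal I ∧ I ≠ {0} ∧ ∀ J : Set B, IsIdeal J → J ⊆ I → J = {0} ∨ J = I

theorem mul_zero' (a : B) : a * (0 : B) = a := by
  have h := SkewLeftBrace.mul_add_eq a (0 : B) (0 : B)
  rw [add_zero] at h
  have h2 : a * (0:B) - a = 0 := (right_eq_add.mp h)
  exact sub_eq_zero.mp h2

theorem zero_eq_one : (0 : B) = 1 := by
  have h := mul_zero' (1 : B)
  rw [one_mul] at h
  exact h

theorem IsIdeal.one_mem {I : Set B} (h : IsIdeal I) : (1 : B) ∈ I :=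
  (zero_eq_one (B := B)) ▸ h.zero_mem

variable (B) in
/-- A skew left brace is *semiprime* if `I*I ≠ {0}` for every nonzero ideal `I`. -/
def Semiprime : Prop := ∀ I : Set B, IsIdeal I → I ≠ {0} → setStar I I ≠ {0}

variable (B) in
/-- A skew left brace is *prime*... (and) *simple* if its only ideals are `{0}` and `B`,
and these are distinct. -/
def Simple : Prop :=
  ({0} : Set B) ≠ Set.univ ∧ ∀ I : Set B, IsIdeal I → I = {0} ∨ I = Set.univ

variable (B) in
/-- A skew left brace is *Artinian* if every descending chain of ideals stabilizes. -/
def Artinian : Prop :=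
  ∀ f : ℕ → Set B, (∀ n, IsIdeal (f n)) → (∀ n, f (n + 1) ⊆ f n) →
    ∃ N, ∀ n, N ≤ n → f n = f N

/-- The `*`-products of copies of a fixed set `I`. -/
inductive IsStarPowerOf (I : Set B) : Set B → Prop
  | base : IsStarPowerOf I I
  | star {X Y : Set B} : IsStarPowerOf I X → IsStarPowerOf I Y →
      IsStarPowerOf I (setStar X Y)

variable (B) in
/-- A skew left brace is *strongly semiprime* if for every nonzero ideal `I`, every
`*`-product of copies of `I` is nonzero. -/
def StronglySemiprime : Prop :=
  ∀ I : Set B, IsIdeal I → I ≠ {0} → ∀ X : Set B, IsStarPowerOf I X → X ≠ {0}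

/-- The `*`-products of nonzero ideals. -/
inductive IsStarProdOfNonzeroIdeals : Set B → Prop
  | ideal {I : Set B} : IsIdeal I → I ≠ {0} → IsStarProdOfNonzeroIdeals I
  | star {X Y : Set B} : IsStarProdOfNonzeroIdeals X → IsStarProdOfNonzeroIdeals Y →
      IsStarProdOfNonzeroIdeals (setStar X Y)

variable (B) in
/-- A skew left brace is *strongly prime* if every `*`-product of nonzero ideals is nonzero. -/
def StronglyPrime : Prop :=
  ∀ X : Set B, IsStarProdOfNonzeroIdeals X → X ≠ {0}

end SkewLeftBrace
namespace SkewLeftBrace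

variable {B : Type*} [SkewLeftBrace B]

/-- An ideal, regarded as a skew left brace with the restricted operations. -/
def IsIdeal.brace {I : Set B} (h : IsIdeal I) : SkewLeftBrace I :=
  letI : Zero I := ⟨⟨0, h.zero_mem⟩⟩
  letI : Add I := ⟨fun x y => ⟨x.1 + y.1, h.add_mem x.2 y.2⟩⟩
  letI : Neg I := ⟨fun x => ⟨-x.1, h.neg_mem x.2⟩⟩
  letI : One I := ⟨⟨1, h.one_mem⟩⟩
  letI : Mul I := ⟨fun x y => ⟨x.1 * y.1, h.mul_mem x.2 y.2⟩⟩
  letI : Inv I := ⟨fun x => ⟨x.1⁻¹, h.inv_mem x.2⟩⟩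
  { add := (· + ·)
    zero := 0
    neg := (- ·)
    nsmul := nsmulRec
    zsmul := zsmulRec
    add_assoc := fun a b c => Subtype.ext (add_assoc a.1 b.1 c.1)
    zero_add := fun a => Subtype.ext (zero_add a.1)
    add_zero := fun a => Subtype.ext (add_zero a.1)
    neg_add_cancel := fun a => Subtype.ext (neg_add_cancel a.1)
    mul := (· * ·)
    one := 1
    inv := (·⁻¹)
    npow := npowRec
    zpow := zpowRec
    mul_assoc := fun a b c => Subtype.ext (mul_assoc a.1 b.1 c.1)
    one_mul := fun a => Subtype.ext (one_mul a.1)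
    mul_one := fun a => Subtype.ext (mul_one a.1)
    inv_mul_cancel := fun a => Subtype.ext (inv_mul_cancel a.1)
    mul_add_eq := fun a b c =>
      Subtype.ext (by
        show a.1 * (b.1 + c.1) = a.1 * b.1 + -a.1 + a.1 * c.1
        rw [SkewLeftBrace.mul_add_eq, sub_eq_add_neg]) }

/-- The direct product of two skew left braces, with componentwise operations. -/
def prodBrace (B₁ B₂ : Type*) [SkewLeftBrace B₁] [SkewLeftBrace B₂] :
    SkewLeftBrace (B₁ × B₂) :=
  { (inferInstance : AddGroup (B₁ × B₂)), (inferInstance : Group (B₁ × B₂)) with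
    mul_add_eq := fun a b c =>
      Prod.ext (by simp [SkewLeftBrace.mul_add_eq]) (by simp [SkewLeftBrace.mul_add_eq]) }

/-- Two skew left braces are isomorphic if there is a bijection preserving `+` and `∘`. -/
def IsBraceIsomorphic (A C : Type*) [SkewLeftBrace A] [SkewLeftBrace C] : Prop :=
  ∃ f : A ≃ C, (∀ x y : A, f (x + y) = f x + f y) ∧ (∀ x y : A, f (x * y) = f x * f y)

/-- A group homomorphism from `(B₂,∘)` to the automorphism group `Aut(B₁,+,∘)` of the
skew left brace `B₁`, presented as an action `act : B₂ → B₁ → B₁` by skew left brace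
automorphisms. -/
structure BraceActionHom (B₂ B₁ : Type*) [SkewLeftBrace B₂] [SkewLeftBrace B₁] where
  act : B₂ → B₁ → B₁
  act_bijective : ∀ a : B₂, Function.Bijective (act a)
  act_add : ∀ (a : B₂) (x y : B₁), act a (x + y) = act a x + act a y
  act_mul : ∀ (a : B₂) (x y : B₁), act a (x * y) = act a x * act a y
  act_hom : ∀ (a b : B₂) (x : B₁), act (a * b) x = act a (act b x)
  act_one : ∀ x : B₁, act (1 : B₂) x = x

variable {B₁ B₂ : Type*} [SkewLeftBrace B₁] [SkewLeftBrace B₂]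

theorem BraceActionHom.act_one' (α : BraceActionHom B₂ B₁) (a : B₂) :
    α.act a (1 : B₁) = 1 := by
  have h := α.act_mul a 1 1
  rw [mul_one] at h
  exact mul_eq_left.mp h.symm

/-- The underlying type of the semidirect product of two skew left braces. -/
@[ext]
structure SDP (B₁ B₂ : Type*) where
  fst : B₁
  snd : B₂

/-- The semidirect product `B₁ ⋊_α B₂` of skew left braces: the additive group is the
direct product, while `(a₁,a₂) ∘ (b₁,b₂) = (a₁ ∘ α_{a₂}(b₁), a₂ ∘ b₂)`. -/
def BraceActionHom.sdp (α : BraceActionHom B₂ B₁) : SkewLeftBrace (SDP B₁ B₂) :=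
  letI : Zero (SDP B₁ B₂) := ⟨⟨0, 0⟩⟩
  letI : Add (SDP B₁ B₂) := ⟨fun p q => ⟨p.fst + q.fst, p.snd + q.snd⟩⟩
  letI : Neg (SDP B₁ B₂) := ⟨fun p => ⟨-p.fst, -p.snd⟩⟩
  letI : One (SDP B₁ B₂) := ⟨⟨1, 1⟩⟩
  letI : Mul (SDP B₁ B₂) := ⟨fun p q => ⟨p.fst * α.act p.snd q.fst, p.snd * q.snd⟩⟩
  letI : Inv (SDP B₁ B₂) := ⟨fun p => ⟨α.act p.snd⁻¹ p.fst⁻¹, p.snd⁻¹⟩⟩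
  { add := (· + ·)
    zero := 0
    neg := (- ·)
    nsmul := nsmulRec
    zsmul := zsmulRec
    add_assoc := fun a b c =>
      SDP.ext (add_assoc a.fst b.fst c.fst) (add_assoc a.snd b.snd c.snd)
    zero_add := fun a => SDP.ext (zero_add a.fst) (zero_add a.snd)
    add_zero := fun a => SDP.ext (add_zero a.fst) (add_zero a.snd)
    neg_add_cancel := fun a => SDP.ext (neg_add_cancel a.fst) (neg_add_cancel a.snd)
    mul := (· * ·)
    one := 1
    inv := (·⁻¹)
    npow := npowRec
    zpow := zpowRec
    mul_assoc := fun a b c =>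
      SDP.ext
        (by show (a.fst * α.act a.snd b.fst) * α.act (a.snd * b.snd) c.fst =
              a.fst * α.act a.snd (b.fst * α.act b.snd c.fst)
            rw [α.act_hom, α.act_mul, mul_assoc])
        (mul_assoc a.snd b.snd c.snd)
    one_mul := fun a =>
      SDP.ext (by show (1 : B₁) * α.act 1 a.fst = a.fst; rw [α.act_one, one_mul])
        (one_mul a.snd)
    mul_one := fun a =>
      SDP.ext (by show a.fst * α.act a.snd (1 : B₁) = a.fst; rw [α.act_one', mul_one])
        (mul_one a.snd)
    inv_mul_cancel := fun a =>
      SDP.ext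
        (by show α.act a.snd⁻¹ a.fst⁻¹ * α.act a.snd⁻¹ a.fst = 1
            rw [← α.act_mul, inv_mul_cancel, α.act_one'])
        (inv_mul_cancel a.snd)
    mul_add_eq := fun a b c =>
      SDP.ext
        (by show a.fst * α.act a.snd (b.fst + c.fst) =
              a.fst * α.act a.snd b.fst + -a.fst + a.fst * α.act a.snd c.fst
            rw [α.act_add, SkewLeftBrace.mul_add_eq, sub_eq_add_neg])
        (by show a.snd * (b.snd + c.snd) = a.snd * b.snd + -a.snd + a.snd * c.snd
            rw [SkewLeftBrace.mul_add_eq, sub_eq_add_neg]) }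

end SkewLeftBrace

/-!
For an ideal `I` of `B₁ ⋊_α B₂`, both `J = {x | (x, 0) ∈ I}` and the projection of `I` to `B₂`
are ideals of the simple braces `B₁` and `B₂`. Three of the four resulting cases give `{0}`,
`B₁ × {0}` and everything. In the remaining case `I` meets `B₁ × {0}` trivially, so, both being
normal in `(B₁ ⋊_α B₂, ∘)`, they commute: each `(c, a) ∈ I` satisfies `α_a(x) = c⁻¹ ∘ x ∘ c`.
As `(B₁, ∘)` is centreless, `c` is determined by `α_a`, so for `a ≠ b` with `α_a = α_b` the ideal
`I` contains `(c, a) - (c, b) = (0, a - b) ≠ 0`. Then `{d | (0, d) ∈ I}` is a nonzero ideal of `B₂`,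
hence all of `B₂`, and `(0, d) ∈ I` forces `α_d = id` for every `d`, contradicting non-triviality.
-/

theorem eq_of_forall_inv_mul_mul_eq {G : Type*} [Group G]
    (hcenter : ∀ g : G, (∀ h : G, g * h = h * g) → g = 1) {c c' : G}
    (h : ∀ x, c⁻¹ * x * c = c'⁻¹ * x * c') : c = c' := by
  have hcentral : c' * c⁻¹ = 1 := hcenter _ fun x => by
    calc c' * c⁻¹ * x = c' * (c⁻¹ * x * c) * c⁻¹ := by group
      _ = x * (c' * c⁻¹) := by rw [h]; group
  exact (mul_inv_eq_one.mp hcentral).symm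

namespace SkewLeftBrace

variable {A B : Type*} [SkewLeftBrace A] [SkewLeftBrace B]

theorem isIdeal_singleton_zero : IsIdeal ({0} : Set B) where
  zero_mem := rfl
  add_mem := by rintro _ _ rfl rfl; exact add_zero 0
  neg_mem := by rintro _ rfl; exact neg_zero
  add_conj_mem b := by rintro _ rfl; exact (add_zero b).symm ▸ add_neg_cancel b
  mul_mem := by rintro _ _ rfl rfl; exact mul_zero' 0
  inv_mem := by rintro _ rfl; rw [Set.mem_singleton_iff, zero_eq_one, inv_one]
  mul_conj_mem b := by
    rintro _ rfl; rw [Set.mem_singleton_iff, mul_zero', mul_inv_cancel, zero_eq_one]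
  lmap_mem a := by rintro _ rfl; rw [Set.mem_singleton_iff, lmap, mul_zero', neg_add_cancel]

theorem IsIdeal.commute_of_inter_subset {I J : Set B} (hI : IsIdeal I) (hJ : IsIdeal J)
    (hIJ : I ∩ J ⊆ {0}) {x y : B} (hx : x ∈ I) (hy : y ∈ J) : Commute x y := by
  have hmem : x * y * x⁻¹ * y⁻¹ ∈ I ∩ J :=
    ⟨by simpa only [mul_assoc] using hI.mul_mem hx (hI.mul_conj_mem y (hI.inv_mem hx)),
      hJ.mul_mem (hJ.mul_conj_mem x hy) (hJ.inv_mem hy)⟩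
  have hcomm : x * y * x⁻¹ * y⁻¹ = 1 := (hIJ hmem).trans zero_eq_one
  rwa [← commutatorElement_def, commutatorElement_eq_one_iff_commute] at hcomm

structure IsBraceHom (f : A → B) : Prop where
  map_add : ∀ x y, f (x + y) = f x + f y
  map_mul : ∀ x y, f (x * y) = f x * f y

namespace IsBraceHom

variable {f : A → B}

theorem map_zero (hf : IsBraceHom f) : f 0 = 0 := (AddMonoidHom.mk' f hf.map_add).map_zero

theorem map_neg (hf : IsBraceHom f) (x : A) : f (-x) = -f x :=
  (AddMonoidHom.mk' f hf.map_add).map_neg x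

theorem map_inv (hf : IsBraceHom f) (x : A) : f x⁻¹ = (f x)⁻¹ :=
  (MonoidHom.mk' f hf.map_mul).map_inv x

theorem map_lmap (hf : IsBraceHom f) (a x : A) : f (lmap a x) = lmap (f a) (f x) := by
  simp only [lmap, hf.map_add, hf.map_neg, hf.map_mul]

end IsBraceHom

theorem IsIdeal.preimage {I : Set B} (hI : IsIdeal I) {f : A → B} (hf : IsBraceHom f) :
    IsIdeal (f ⁻¹' I) where
  zero_mem := by rw [Set.mem_preimage, hf.map_zero]; exact hI.zero_mem
  add_mem x y hx hy := by rw [Set.mem_preimage, hf.map_add]; exact hI.add_mem hx hy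
  neg_mem x hx := by rw [Set.mem_preimage, hf.map_neg]; exact hI.neg_mem hx
  add_conj_mem b x hx := by
    rw [Set.mem_preimage, hf.map_add, hf.map_add, hf.map_neg]; exact hI.add_conj_mem _ hx
  mul_mem x y hx hy := by rw [Set.mem_preimage, hf.map_mul]; exact hI.mul_mem hx hy
  inv_mem x hx := by rw [Set.mem_preimage, hf.map_inv]; exact hI.inv_mem hx
  mul_conj_mem b x hx := by
    rw [Set.mem_preimage, hf.map_mul, hf.map_mul, hf.map_inv]; exact hI.mul_conj_mem _ hx
  lmap_mem a x hx := by rw [Set.mem_preimage, hf.map_lmap]; exact hI.lmap_mem _ hx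

theorem IsIdeal.image {I : Set A} (hI : IsIdeal I) {f : A → B} (hf : IsBraceHom f)
    (hsurj : Function.Surjective f) : IsIdeal (f '' I) where
  zero_mem := ⟨0, hI.zero_mem, hf.map_zero⟩
  add_mem := by
    rintro _ _ ⟨x, hx, rfl⟩ ⟨y, hy, rfl⟩; exact ⟨x + y, hI.add_mem hx hy, hf.map_add x y⟩
  neg_mem := by rintro _ ⟨x, hx, rfl⟩; exact ⟨-x, hI.neg_mem hx, hf.map_neg x⟩
  add_conj_mem b := by
    rintro _ ⟨x, hx, rfl⟩
    obtain ⟨b, rfl⟩ := hsurj b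
    exact ⟨b + x + -b, hI.add_conj_mem b hx, by rw [hf.map_add, hf.map_add, hf.map_neg]⟩
  mul_mem := by
    rintro _ _ ⟨x, hx, rfl⟩ ⟨y, hy, rfl⟩; exact ⟨x * y, hI.mul_mem hx hy, hf.map_mul x y⟩
  inv_mem := by rintro _ ⟨x, hx, rfl⟩; exact ⟨x⁻¹, hI.inv_mem hx, hf.map_inv x⟩
  mul_conj_mem b := by
    rintro _ ⟨x, hx, rfl⟩
    obtain ⟨b, rfl⟩ := hsurj b
    exact ⟨b * x * b⁻¹, hI.mul_conj_mem b hx, by rw [hf.map_mul, hf.map_mul, hf.map_inv]⟩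
  lmap_mem a := by
    rintro _ ⟨x, hx, rfl⟩
    obtain ⟨a, rfl⟩ := hsurj a
    exact ⟨lmap a x, hI.lmap_mem a hx, hf.map_lmap a x⟩

variable {B₁ B₂ : Type*}

namespace SDP

def inl [Zero B₂] (x : B₁) : SDP B₁ B₂ := ⟨x, 0⟩

def inr [Zero B₁] (b : B₂) : SDP B₁ B₂ := ⟨0, b⟩

theorem range_inl [Zero B₂] : Set.range (inl : B₁ → SDP B₁ B₂) = {p : SDP B₁ B₂ | p.snd = 0} :=
  Set.ext fun p => ⟨by rintro ⟨x, rfl⟩; rfl, fun hp => ⟨p.fst, SDP.ext rfl hp.symm⟩⟩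

theorem eq_image_inl_of_image_snd_eq [Zero B₂] {I : Set (SDP B₁ B₂)} (hP : snd '' I = {0}) :
    I = inl '' (inl ⁻¹' I) :=
  (Set.image_preimage_eq_of_subset fun p hp =>
    ⟨p.fst, SDP.ext rfl (Set.mem_singleton_iff.mp (hP.subset ⟨p, hp, rfl⟩)).symm⟩).symm

end SDP

namespace BraceActionHom

variable [SkewLeftBrace B₁] [SkewLeftBrace B₂] (α : BraceActionHom B₂ B₁)

theorem act_zero_left (x : B₁) : α.act 0 x = x := by rw [zero_eq_one]; exact α.act_one x

theorem act_zero_right (a : B₂) : α.act a 0 = 0 := by rw [zero_eq_one]; exact α.act_one' a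

theorem isBraceHom_snd : @IsBraceHom _ _ α.sdp _ (SDP.snd : SDP B₁ B₂ → B₂) :=
  @IsBraceHom.mk _ _ α.sdp _ _ (fun _ _ => rfl) (fun _ _ => rfl)

theorem isBraceHom_inl : @IsBraceHom _ _ _ α.sdp (SDP.inl : B₁ → SDP B₁ B₂) :=
  @IsBraceHom.mk _ _ _ α.sdp _ (fun _ _ => SDP.ext rfl (add_zero 0).symm)
    fun x y => SDP.ext (show x * y = x * α.act 0 y by rw [act_zero_left]) (mul_zero' 0).symm

theorem isBraceHom_inr : @IsBraceHom _ _ _ α.sdp (SDP.inr : B₂ → SDP B₁ B₂) :=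
  @IsBraceHom.mk _ _ _ α.sdp _ (fun _ _ => SDP.ext (add_zero 0).symm rfl)
    fun a _ => SDP.ext (show (0 : B₁) = 0 * α.act a 0 by rw [act_zero_right, mul_zero']) rfl

variable {α} {I : Set (SDP B₁ B₂)}

theorem fst_mul_act_eq_of_mem (hI : @IsIdeal _ α.sdp I) (hJ : SDP.inl ⁻¹' I ⊆ {0})
    {p : SDP B₁ B₂} (hp : p ∈ I) (x : B₁) : p.fst * α.act p.snd x = x * p.fst := by
  let _ := α.sdp
  have hIK : I ∩ SDP.snd ⁻¹' {0} ⊆ {0} := by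
    rintro ⟨y, b⟩ ⟨hy, rfl : b = 0⟩
    obtain rfl : y = 0 := hJ hy
    rfl
  have hK := isIdeal_singleton_zero.preimage α.isBraceHom_snd
  have hcomm := (hI.commute_of_inter_subset hK hIK hp (show (SDP.inl x).snd = 0 from rfl)).eq
  have hfst : p.fst * α.act p.snd x = x * α.act 0 p.fst := congrArg SDP.fst hcomm
  rwa [act_zero_left] at hfst

theorem eq_univ_of_preimage_inl_eq_univ (hI : @IsIdeal _ α.sdp I)
    (hJ : SDP.inl ⁻¹' I = Set.univ) (hP : SDP.snd '' I = Set.univ) : I = Set.univ := by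
  let _ := α.sdp
  refine Set.eq_univ_of_forall fun p => ?_
  obtain ⟨q, hq, hqp⟩ : p.snd ∈ SDP.snd '' I := hP ▸ Set.mem_univ _
  have hdiff : SDP.inl (p.fst + -q.fst) ∈ I := Set.eq_univ_iff_forall.mp hJ _
  convert hI.add_mem hdiff hq using 1
  exact SDP.ext (neg_add_cancel_right p.fst q.fst).symm (hqp ▸ (zero_add q.snd).symm)

theorem act_eq_self_of_complement_ideal (h₂ : Simple B₂)
    (hninj : ¬ ∀ a b : B₂, (∀ x : B₁, α.act a x = α.act b x) → a = b)
    (hcenter : ∀ g : B₁, (∀ h : B₁, g * h = h * g) → g = 1) (hI : @IsIdeal _ α.sdp I)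
    (hJ : SDP.inl ⁻¹' I = {0}) (hP : SDP.snd '' I = Set.univ) (a : B₂) (x : B₁) :
    α.act a x = x := by
  let _ := α.sdp
  have hconj {p : SDP B₁ B₂} (hp : p ∈ I) (y : B₁) : α.act p.snd y = p.fst⁻¹ * y * p.fst := by
    rw [mul_assoc, eq_inv_mul_iff_mul_eq, fst_mul_act_eq_of_mem hI hJ.subset hp]
  have hgraph (b : B₂) : ∃ c, SDP.mk c b ∈ I := by
    obtain ⟨p, hp, rfl⟩ : b ∈ SDP.snd '' I := hP ▸ Set.mem_univ b
    exact ⟨p.fst, hp⟩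
  push Not at hninj
  obtain ⟨a₁, a₂, hact, hne⟩ := hninj
  obtain ⟨c₁, hc₁⟩ := hgraph a₁
  obtain ⟨c₂, hc₂⟩ := hgraph a₂
  obtain rfl : c₁ = c₂ := eq_of_forall_inv_mul_mul_eq hcenter fun y => by
    rw [← hconj hc₁, ← hconj hc₂]; exact hact y
  have hdiff : SDP.inr (a₁ + -a₂) ∈ I := by
    convert hI.add_mem hc₁ (hI.neg_mem hc₂) using 1
    exact SDP.ext (add_neg_cancel c₁).symm rfl
  rcases h₂.2 _ (hI.preimage α.isBraceHom_inr) with hN | hN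
  · exact absurd (add_neg_eq_zero.mp (hN.subset hdiff)) hne
  · have hx := hconj (Set.eq_univ_iff_forall.mp hN a) x
    rwa [SDP.inr, zero_eq_one, inv_one, one_mul, mul_one] at hx

end BraceActionHom

end SkewLeftBrace

open SkewLeftBrace

/-- If `B₁`, `B₂` are simple, `α` is non-trivial and non-injective, and `(B₁,∘)` has
trivial center, then the only ideals of `B₁ ⋊_α B₂` are `{0}`, `B₁ × {0}` and the whole
brace; in particular `B₁ × {0}` is the unique non-trivial ideal. -/
theorem ideals_of_sdp_of_noninjective {B₁ B₂ : Type*} [SkewLeftBrace B₁] [SkewLeftBrace B₂]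
    (h₁ : SkewLeftBrace.Simple B₁) (h₂ : SkewLeftBrace.Simple B₂)
    (α : BraceActionHom B₂ B₁)
    (hα : ∃ (a : B₂) (x : B₁), α.act a x ≠ x)
    (hninj : ¬ ∀ a b : B₂, (∀ x : B₁, α.act a x = α.act b x) → a = b)
    (hcenter : ∀ g : B₁, (∀ h : B₁, g * h = h * g) → g = 1) :
    (∀ I : Set (SDP B₁ B₂), @IsIdeal _ α.sdp I →
        I = {SDP.mk 0 0} ∨ I = {p : SDP B₁ B₂ | p.snd = 0} ∨ I = Set.univ) ∧
      @IsIdeal _ α.sdp {p : SDP B₁ B₂ | p.snd = 0} ∧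
      ({p : SDP B₁ B₂ | p.snd = 0} : Set (SDP B₁ B₂)) ≠ {SDP.mk 0 0} ∧
      ({p : SDP B₁ B₂ | p.snd = 0} : Set (SDP B₁ B₂)) ≠ Set.univ := by
  let _ := α.sdp
  refine ⟨fun I hI => ?_, isIdeal_singleton_zero.preimage α.isBraceHom_snd, fun hK => ?_,
    fun hK => ?_⟩
  · rcases h₂.2 _ (hI.image α.isBraceHom_snd fun b => ⟨SDP.inr b, rfl⟩) with hP | hP <;>
      rcases h₁.2 _ (hI.preimage α.isBraceHom_inl) with hJ | hJ
    · left
      rw [SDP.eq_image_inl_of_image_snd_eq hP, hJ, Set.image_singleton]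
      rfl
    · right; left
      rw [SDP.eq_image_inl_of_image_snd_eq hP, hJ, Set.image_univ, SDP.range_inl]
    · obtain ⟨a, x, hax⟩ := hα
      exact absurd (BraceActionHom.act_eq_self_of_complement_ideal h₂ hninj hcenter hI hJ hP a x)
        hax
    · exact Or.inr (Or.inr (BraceActionHom.eq_univ_of_preimage_inl_eq_univ hI hJ hP))
  · obtain ⟨x, hx⟩ := (Set.ne_univ_iff_exists_notMem _).mp h₁.1
    exact hx (congrArg SDP.fst (hK.subset (show (SDP.inl x : SDP B₁ B₂).snd = 0 from rfl)))
  · obtain ⟨b, hb⟩ := (Set.ne_univ_iff_exists_notMem _).mp h₂.1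
    exact hb (hK.symm.subset (Set.mem_univ (SDP.inr b)))
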